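/- Suppose Re(Ω₋) = Re(Ω₊) (entrywise equality of real parts). Then for every s ∈ ℂ with sI_{2n} − A invertible: (i) if S, C₋, C₊ all have real entries, then G_qp[s] = 0; (ii) if S has real entries and C₋, C₊ are purely imaginary, then G_pq[s] = 0; (iii) if S is purely imaginary and C₋, C₊ have real entries, then G_qq[s] = 0; (iv) if S, C₋, C₊ are all purely imaginary, then G_pp[s] = 0. Each vanishing block expresses a unilateral BAE measurement. -/
import Mathlib


open Matrix

noncomputable section

namespace LQS

/-- Entrywise real part, as a complex matrix. -/
def matRe {k l : ℕ} (X : Matrix (Fin k) (Fin l) ℂ) : Matrix (Fin k) (Fin l) ℂ :=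
  fun i j => ((X i j).re : ℂ)

/-- Entrywise imaginary part, as a complex matrix. -/
def matIm {k l : ℕ} (X : Matrix (Fin k) (Fin l) ℂ) : Matrix (Fin k) (Fin l) ℂ :=
  fun i j => ((X i j).im : ℂ)

/-- A complex matrix has real entries. -/
def isReal {k l : ℕ} (X : Matrix (Fin k) (Fin l) ℂ) : Prop := ∀ i j, (X i j).im = 0

/-- A complex matrix is purely imaginary (every entry has zero real part). -/
def isPurelyImag {k l : ℕ} (X : Matrix (Fin k) (Fin l) ℂ) : Prop := ∀ i j, (X i j).re = 0

/-- The symplectic matrix J_k = [[0, I],[−I, 0]]. -/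
def Jmat (k : ℕ) : Matrix (Fin k ⊕ Fin k) (Fin k ⊕ Fin k) ℂ :=
  fromBlocks 0 1 (-1) 0

/-- D = [[Re S, −Im S],[Im S, Re S]]. -/
def quadD {m : ℕ} (S : Matrix (Fin m) (Fin m) ℂ) :
    Matrix (Fin m ⊕ Fin m) (Fin m ⊕ Fin m) ℂ :=
  fromBlocks (matRe S) (-(matIm S)) (matIm S) (matRe S)

/-- C = [[Re(C₋+C₊), −Im(C₋−C₊)],[Im(C₋+C₊), Re(C₋−C₊)]]. -/
def quadC {m n : ℕ} (Cm Cp : Matrix (Fin m) (Fin n) ℂ) :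
    Matrix (Fin m ⊕ Fin m) (Fin n ⊕ Fin n) ℂ :=
  fromBlocks (matRe (Cm + Cp)) (-(matIm (Cm - Cp))) (matIm (Cm + Cp)) (matRe (Cm - Cp))

/-- B = −[[Re((C₋−C₊)†), −Im((C₋−C₊)†)],[Im((C₋+C₊)†), Re((C₋+C₊)†)]]·D. -/
def quadB {m n : ℕ} (S : Matrix (Fin m) (Fin m) ℂ) (Cm Cp : Matrix (Fin m) (Fin n) ℂ) :
    Matrix (Fin n ⊕ Fin n) (Fin m ⊕ Fin m) ℂ :=
  -(fromBlocks (matRe (Cm - Cp)ᴴ) (-(matIm (Cm - Cp)ᴴ))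
      (matIm (Cm + Cp)ᴴ) (matRe (Cm + Cp)ᴴ)) * quadD S

/-- JH = [[Im(Ω₋+Ω₊), Re(Ω₋−Ω₊)],[−Re(Ω₋+Ω₊), Im(Ω₋−Ω₊)]]. -/
def quadJH {n : ℕ} (Om Op : Matrix (Fin n) (Fin n) ℂ) :
    Matrix (Fin n ⊕ Fin n) (Fin n ⊕ Fin n) ℂ :=
  fromBlocks (matIm (Om + Op)) (matRe (Om - Op)) (-(matRe (Om + Op))) (matIm (Om - Op))

/-- C♯ = −J_n·Cᵀ·J_m. -/
def quadCsharp {m n : ℕ} (Cm Cp : Matrix (Fin m) (Fin n) ℂ) :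
    Matrix (Fin n ⊕ Fin n) (Fin m ⊕ Fin m) ℂ :=
  -(Jmat n) * (quadC Cm Cp)ᵀ * (Jmat m)

/-- A = JH − (1/2)·C♯·C. -/
def quadA {m n : ℕ} (Cm Cp : Matrix (Fin m) (Fin n) ℂ) (Om Op : Matrix (Fin n) (Fin n) ℂ) :
    Matrix (Fin n ⊕ Fin n) (Fin n ⊕ Fin n) ℂ :=
  quadJH Om Op - (1/2 : ℂ) • (quadCsharp Cm Cp * quadC Cm Cp)

/-- Transfer matrix G[s] = D + C(sI − A)⁻¹B. -/
def transferG {m n : ℕ} (S : Matrix (Fin m) (Fin m) ℂ) (Cm Cp : Matrix (Fin m) (Fin n) ℂ)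
    (Om Op : Matrix (Fin n) (Fin n) ℂ) (s : ℂ) :
    Matrix (Fin m ⊕ Fin m) (Fin m ⊕ Fin m) ℂ :=
  quadD S + quadC Cm Cp *
    (s • (1 : Matrix (Fin n ⊕ Fin n) (Fin n ⊕ Fin n) ℂ) - quadA Cm Cp Om Op)⁻¹ *
    quadB S Cm Cp

end LQS

open LQS Matrix

set_option linter.unusedSectionVars false

section BlockCalc

variable {R : Type*} [CommRing R]
variable {a b c d e f : Type*} [Fintype c] [Fintype d]

lemma tb11_mul (X : Matrix (a ⊕ b) (c ⊕ d) R) (Y : Matrix (c ⊕ d) (e ⊕ f) R) :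
    (X * Y).toBlocks₁₁ = X.toBlocks₁₁ * Y.toBlocks₁₁ + X.toBlocks₁₂ * Y.toBlocks₂₁ := by
  ext i j
  simp [Matrix.toBlocks₁₁, Matrix.toBlocks₁₂, Matrix.toBlocks₂₁, Matrix.mul_apply,
    Fintype.sum_sum_type]

lemma tb12_mul (X : Matrix (a ⊕ b) (c ⊕ d) R) (Y : Matrix (c ⊕ d) (e ⊕ f) R) :
    (X * Y).toBlocks₁₂ = X.toBlocks₁₁ * Y.toBlocks₁₂ + X.toBlocks₁₂ * Y.toBlocks₂₂ := by
  ext i j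
  simp [Matrix.toBlocks₁₁, Matrix.toBlocks₁₂, Matrix.toBlocks₂₂, Matrix.mul_apply,
    Fintype.sum_sum_type]

lemma tb21_mul (X : Matrix (a ⊕ b) (c ⊕ d) R) (Y : Matrix (c ⊕ d) (e ⊕ f) R) :
    (X * Y).toBlocks₂₁ = X.toBlocks₂₁ * Y.toBlocks₁₁ + X.toBlocks₂₂ * Y.toBlocks₂₁ := by
  ext i j
  simp [Matrix.toBlocks₂₁, Matrix.toBlocks₂₂, Matrix.toBlocks₁₁, Matrix.mul_apply,
    Fintype.sum_sum_type]

lemma tb22_mul (X : Matrix (a ⊕ b) (c ⊕ d) R) (Y : Matrix (c ⊕ d) (e ⊕ f) R) :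
    (X * Y).toBlocks₂₂ = X.toBlocks₂₁ * Y.toBlocks₁₂ + X.toBlocks₂₂ * Y.toBlocks₂₂ := by
  ext i j
  simp [Matrix.toBlocks₂₁, Matrix.toBlocks₂₂, Matrix.toBlocks₁₂, Matrix.mul_apply,
    Fintype.sum_sum_type]

lemma tb11_add (X Y : Matrix (a ⊕ b) (c ⊕ d) R) :
    (X + Y).toBlocks₁₁ = X.toBlocks₁₁ + Y.toBlocks₁₁ := rfl
lemma tb12_add (X Y : Matrix (a ⊕ b) (c ⊕ d) R) :
    (X + Y).toBlocks₁₂ = X.toBlocks₁₂ + Y.toBlocks₁₂ := rfl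
lemma tb21_add (X Y : Matrix (a ⊕ b) (c ⊕ d) R) :
    (X + Y).toBlocks₂₁ = X.toBlocks₂₁ + Y.toBlocks₂₁ := rfl
lemma tb22_add (X Y : Matrix (a ⊕ b) (c ⊕ d) R) :
    (X + Y).toBlocks₂₂ = X.toBlocks₂₂ + Y.toBlocks₂₂ := rfl
lemma tb12_sub (X Y : Matrix (a ⊕ b) (c ⊕ d) R) :
    (X - Y).toBlocks₁₂ = X.toBlocks₁₂ - Y.toBlocks₁₂ := rfl
lemma tb11_neg (X : Matrix (a ⊕ b) (c ⊕ d) R) : (-X).toBlocks₁₁ = -X.toBlocks₁₁ := rfl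
lemma tb12_neg (X : Matrix (a ⊕ b) (c ⊕ d) R) : (-X).toBlocks₁₂ = -X.toBlocks₁₂ := rfl
lemma tb21_neg (X : Matrix (a ⊕ b) (c ⊕ d) R) : (-X).toBlocks₂₁ = -X.toBlocks₂₁ := rfl
lemma tb22_neg (X : Matrix (a ⊕ b) (c ⊕ d) R) : (-X).toBlocks₂₂ = -X.toBlocks₂₂ := rfl
lemma tb12_smul (r : R) (X : Matrix (a ⊕ b) (c ⊕ d) R) :
    (r • X).toBlocks₁₂ = r • X.toBlocks₁₂ := rfl
lemma tb12_one [DecidableEq a] [DecidableEq b] :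
    (1 : Matrix (a ⊕ b) (a ⊕ b) R).toBlocks₁₂ = 0 := by
  rw [← fromBlocks_one, toBlocks_fromBlocks₁₂]

end BlockCalc

/-- The inverse of an invertible block lower-triangular matrix is block lower-triangular. -/
lemma inv_tb12 {a : Type*} [Fintype a] [DecidableEq a]
    (M : Matrix (a ⊕ a) (a ⊕ a) ℂ) (h12 : M.toBlocks₁₂ = 0) (hU : IsUnit M) :
    (M⁻¹).toBlocks₁₂ = 0 := by
  have hdet : IsUnit M.det := (Matrix.isUnit_iff_isUnit_det M).mp hU
  have h1 : M * M⁻¹ = 1 := Matrix.mul_nonsing_inv M hdet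
  have e11 : M.toBlocks₁₁ * (M⁻¹).toBlocks₁₁ = 1 := by
    have h := congrArg Matrix.toBlocks₁₁ h1
    rw [tb11_mul, h12, Matrix.zero_mul, add_zero] at h
    rw [h, ← fromBlocks_one, toBlocks_fromBlocks₁₁]
  have e12 : M.toBlocks₁₁ * (M⁻¹).toBlocks₁₂ = 0 := by
    have h := congrArg Matrix.toBlocks₁₂ h1
    rw [tb12_mul, h12, Matrix.zero_mul, add_zero, tb12_one] at h
    exact h
  calc (M⁻¹).toBlocks₁₂
      = ((M⁻¹).toBlocks₁₁ * M.toBlocks₁₁) * (M⁻¹).toBlocks₁₂ := by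
        rw [mul_eq_one_comm.mp e11, Matrix.one_mul]
    _ = (M⁻¹).toBlocks₁₁ * (M.toBlocks₁₁ * (M⁻¹).toBlocks₁₂) := Matrix.mul_assoc _ _ _
    _ = 0 := by rw [e12, Matrix.mul_zero]

section Helpers

variable {k l : ℕ}

lemma matIm_zero {X : Matrix (Fin k) (Fin l) ℂ} (h : isReal X) : matIm X = 0 :=
  funext fun i => funext fun j => by simp [matIm, h i j]

lemma matRe_zero {X : Matrix (Fin k) (Fin l) ℂ} (h : isPurelyImag X) : matRe X = 0 :=
  funext fun i => funext fun j => by simp [matRe, h i j]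

lemma isReal_add {X Y : Matrix (Fin k) (Fin l) ℂ} (hX : isReal X) (hY : isReal Y) :
    isReal (X + Y) := fun i j => by simp [Matrix.add_apply, hX i j, hY i j]

lemma isReal_sub {X Y : Matrix (Fin k) (Fin l) ℂ} (hX : isReal X) (hY : isReal Y) :
    isReal (X - Y) := fun i j => by simp [Matrix.sub_apply, hX i j, hY i j]

lemma isReal_conjT {X : Matrix (Fin k) (Fin l) ℂ} (hX : isReal X) : isReal Xᴴ :=
  fun i j => by simp [Matrix.conjTranspose_apply, hX j i]

lemma isPI_add {X Y : Matrix (Fin k) (Fin l) ℂ} (hX : isPurelyImag X) (hY : isPurelyImag Y) :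
    isPurelyImag (X + Y) := fun i j => by simp [Matrix.add_apply, hX i j, hY i j]

lemma isPI_sub {X Y : Matrix (Fin k) (Fin l) ℂ} (hX : isPurelyImag X) (hY : isPurelyImag Y) :
    isPurelyImag (X - Y) := fun i j => by simp [Matrix.sub_apply, hX i j, hY i j]

lemma isPI_conjT {X : Matrix (Fin k) (Fin l) ℂ} (hX : isPurelyImag X) : isPurelyImag Xᴴ :=
  fun i j => by simp [Matrix.conjTranspose_apply, hX j i]

end Helpers

/-- The ₁₂ block of the resolvent vanishes when (C♯C)₁₂ = 0 and Re(Ω₋−Ω₊) = 0. -/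
lemma N12_zero {m n : ℕ} (Cm Cp : Matrix (Fin m) (Fin n) ℂ) (Om Op : Matrix (Fin n) (Fin n) ℂ)
    (hReOP : matRe (Om - Op) = 0)
    (hC : (quadC Cm Cp).toBlocks₁₂ = 0 ∨ (quadC Cm Cp).toBlocks₂₂ = 0)
    (s : ℂ)
    (hU : IsUnit (s • (1 : Matrix (Fin n ⊕ Fin n) (Fin n ⊕ Fin n) ℂ) - quadA Cm Cp Om Op)) :
    ((s • (1 : Matrix (Fin n ⊕ Fin n) (Fin n ⊕ Fin n) ℂ) - quadA Cm Cp Om Op)⁻¹).toBlocks₁₂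
      = 0 := by
  apply inv_tb12 _ _ hU
  obtain ⟨c1, c2, c3, c4, hCb⟩ : ∃ c1 c2 c3 c4, quadC Cm Cp = fromBlocks c1 c2 c3 c4 :=
    ⟨_, _, _, _, (fromBlocks_toBlocks _).symm⟩
  have key : (quadCsharp Cm Cp * quadC Cm Cp).toBlocks₁₂ = 0 := by
    rcases hC with h | h
    · rw [hCb, toBlocks_fromBlocks₁₂] at h
      subst h
      rw [quadCsharp, hCb]
      simp [Jmat, fromBlocks_transpose, fromBlocks_multiply, Matrix.fromBlocks_neg,
        Matrix.neg_mul, Matrix.mul_neg]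
    · rw [hCb, toBlocks_fromBlocks₂₂] at h
      subst h
      rw [quadCsharp, hCb]
      simp [Jmat, fromBlocks_transpose, fromBlocks_multiply, Matrix.fromBlocks_neg,
        Matrix.neg_mul, Matrix.mul_neg]
  have hA : (quadA Cm Cp Om Op).toBlocks₁₂ = 0 := by
    simp only [quadA, quadJH]
    rw [tb12_sub, tb12_smul, key, smul_zero, sub_zero, toBlocks_fromBlocks₁₂, hReOP]
  rw [tb12_sub, tb12_smul, tb12_one, smul_zero, hA, sub_zero]


/-- Unilateral BAE when Re(Ω₋) = Re(Ω₊): four cases according to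
whether S and C₋, C₊ are real or purely imaginary. -/
theorem stmt_5 {m n : ℕ} (hm : 1 ≤ m) (hn : 1 ≤ n)
    (S : Matrix (Fin m) (Fin m) ℂ) (Cm Cp : Matrix (Fin m) (Fin n) ℂ)
    (Om Op : Matrix (Fin n) (Fin n) ℂ)
    (hS : S ∈ Matrix.unitaryGroup (Fin m) ℂ)
    (hOmH : Omᴴ = Om) (hOpS : Opᵀ = Op)
    (hRe : ∀ i j, (Om i j).re = (Op i j).re) :
    ∀ s : ℂ,
      IsUnit (s • (1 : Matrix (Fin n ⊕ Fin n) (Fin n ⊕ Fin n) ℂ) - quadA Cm Cp Om Op) →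
      (isReal S → isReal Cm → isReal Cp →
        (transferG S Cm Cp Om Op s).toBlocks₁₂ = 0) ∧
      (isReal S → isPurelyImag Cm → isPurelyImag Cp →
        (transferG S Cm Cp Om Op s).toBlocks₂₁ = 0) ∧
      (isPurelyImag S → isReal Cm → isReal Cp →
        (transferG S Cm Cp Om Op s).toBlocks₁₁ = 0) ∧
      (isPurelyImag S → isPurelyImag Cm → isPurelyImag Cp →
        (transferG S Cm Cp Om Op s).toBlocks₂₂ = 0) := by
  intro s hU
  have hReOP : matRe (Om - Op) = 0 := funext fun i => funext fun j => by
    simp [matRe, Matrix.sub_apply, Complex.sub_re, hRe i j]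
  refine ⟨?_, ?_, ?_, ?_⟩
  · -- case (i): S, Cm, Cp real
    intro hSr hCmr hCpr
    have hC12 : (quadC Cm Cp).toBlocks₁₂ = 0 := by
      simp only [quadC]
      rw [toBlocks_fromBlocks₁₂, matIm_zero (isReal_sub hCmr hCpr), neg_zero]
    have hD12 : (quadD S).toBlocks₁₂ = 0 := by
      simp only [quadD]
      rw [toBlocks_fromBlocks₁₂, matIm_zero hSr, neg_zero]
    have hB12 : (quadB S Cm Cp).toBlocks₁₂ = 0 := by
      simp only [quadB]
      simp [tb12_neg, tb12_mul, toBlocks_fromBlocks₁₁, toBlocks_fromBlocks₁₂,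
        matIm_zero (isReal_sub (isReal_conjT hCmr) (isReal_conjT hCpr)), hD12]
    have hN := N12_zero Cm Cp Om Op hReOP (Or.inl hC12) s hU
    simp only [transferG]
    simp [tb12_add, tb12_mul, tb11_mul, hD12, hC12, hB12, hN]
  · -- case (ii): S real, Cm Cp purely imaginary
    intro hSr hCmi hCpi
    have hC22 : (quadC Cm Cp).toBlocks₂₂ = 0 := by
      simp only [quadC]
      rw [toBlocks_fromBlocks₂₂, matRe_zero (isPI_sub hCmi hCpi)]
    have hD21 : (quadD S).toBlocks₂₁ = 0 := by
      simp only [quadD]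
      rw [toBlocks_fromBlocks₂₁, matIm_zero hSr]
    have hB11 : (quadB S Cm Cp).toBlocks₁₁ = 0 := by
      simp only [quadB]
      simp [tb11_neg, tb11_mul, toBlocks_fromBlocks₁₁, toBlocks_fromBlocks₁₂,
        matRe_zero (isPI_sub (isPI_conjT hCmi) (isPI_conjT hCpi)), hD21]
    have hN := N12_zero Cm Cp Om Op hReOP (Or.inr hC22) s hU
    simp only [transferG]
    simp [tb21_add, tb21_mul, tb22_mul, hD21, hC22, hB11, hN]
  · -- case (iii): S purely imaginary, Cm Cp real
    intro hSi hCmr hCpr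
    have hC12 : (quadC Cm Cp).toBlocks₁₂ = 0 := by
      simp only [quadC]
      rw [toBlocks_fromBlocks₁₂, matIm_zero (isReal_sub hCmr hCpr), neg_zero]
    have hD11 : (quadD S).toBlocks₁₁ = 0 := by
      simp only [quadD]
      rw [toBlocks_fromBlocks₁₁, matRe_zero hSi]
    have hB11 : (quadB S Cm Cp).toBlocks₁₁ = 0 := by
      simp only [quadB]
      simp [tb11_neg, tb11_mul, toBlocks_fromBlocks₁₁, toBlocks_fromBlocks₁₂,
        matIm_zero (isReal_sub (isReal_conjT hCmr) (isReal_conjT hCpr)), hD11]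
    have hN := N12_zero Cm Cp Om Op hReOP (Or.inl hC12) s hU
    simp only [transferG]
    simp [tb11_add, tb11_mul, tb12_mul, hD11, hC12, hB11, hN]
  · -- case (iv): S, Cm, Cp purely imaginary
    intro hSi hCmi hCpi
    have hC22 : (quadC Cm Cp).toBlocks₂₂ = 0 := by
      simp only [quadC]
      rw [toBlocks_fromBlocks₂₂, matRe_zero (isPI_sub hCmi hCpi)]
    have hD22 : (quadD S).toBlocks₂₂ = 0 := by
      simp only [quadD]
      rw [toBlocks_fromBlocks₂₂, matRe_zero hSi]
    have hB12 : (quadB S Cm Cp).toBlocks₁₂ = 0 := by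
      simp only [quadB]
      simp [tb12_neg, tb12_mul, toBlocks_fromBlocks₁₁, toBlocks_fromBlocks₁₂,
        matRe_zero (isPI_sub (isPI_conjT hCmi) (isPI_conjT hCpi)), hD22]
    have hN := N12_zero Cm Cp Om Op hReOP (Or.inr hC22) s hU
    simp only [transferG]
    simp [tb22_add, tb22_mul, tb21_mul, hD22, hC22, hB12, hN]
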